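/- arXiv:1304.3570 — 5 statements merged into one kernel-verified Lean document; each statement's English description precedes it below -/
import Mathlib

section
/- The infimum of J(φ) over all nonzero real Schwartz functions φ on ℝ³ with K₀(φ) = 0 equals the infimum of G₀(φ) over all nonzero real Schwartz functions φ on ℝ³ with K₀(φ) ≤ 0. -/
open MeasureTheory SchwartzMap
open scoped FourierTransform RealInnerProductSpace ENNReal

noncomputable section

abbrev E3 : Type := EuclideanSpace ℝ (Fin 3)

/-- Static Klein-Gordon energy. -/
def Jfun (φ : E3 → ℝ) : ℝ :=
  ∫ x : E3, (((φ x) ^ 2 + ‖gradient φ x‖ ^ 2) / 2 - (φ x) ^ 4 / 4)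

def K0fun (φ : E3 → ℝ) : ℝ :=
  ∫ x : E3, ((φ x) ^ 2 + ‖gradient φ x‖ ^ 2 - (φ x) ^ 4)

def K2fun (φ : E3 → ℝ) : ℝ :=
  ∫ x : E3, (‖gradient φ x‖ ^ 2 - (3 / 4) * (φ x) ^ 4)

def G0fun (φ : E3 → ℝ) : ℝ := Jfun φ - K0fun φ / 4

def G2fun (φ : E3 → ℝ) : ℝ := Jfun φ - K2fun φ / 3

/-- Squared homogeneous `Ḣ⁻¹` norm. -/
def Hm1sq (v : E3 → ℝ) : ℝ :=
  ∫ ξ : E3, ‖ξ‖⁻¹ ^ 2 * ‖𝓕 (fun x : E3 => (v x : ℂ)) ξ‖ ^ 2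

/-- Energy of the Klein-Gordon-Zakharov system. -/
def Efun (α : ℝ) (u w n v : E3 → ℝ) : ℝ :=
  (∫ x : E3, ((u x) ^ 2 + ‖gradient u x‖ ^ 2 + (w x) ^ 2) / 2)
    + (1 / 4) * ((α ^ 2)⁻¹ * Hm1sq v + ∫ x : E3, (n x) ^ 2)
    - (1 / 2) * ∫ x : E3, n x * (u x) ^ 2

/-- Squared `L²` norm for ‖φ‖²_{L⁴}: `(∫ φ⁴)^{1/2}`. -/
def L4sq (φ : E3 → ℝ) : ℝ := (∫ x : E3, (φ x) ^ 4) ^ ((1 : ℝ) / 2)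

/-- Laplacian. -/
def lap (f : E3 → ℝ) (x : E3) : ℝ :=
  ∑ i : Fin 3, fderiv ℝ (fun y => fderiv ℝ f y (EuclideanSpace.single i 1)) x
    (EuclideanSpace.single i 1)

/-- Time derivative. -/
def dt (u : ℝ → E3 → ℝ) (t : ℝ) (x : E3) : ℝ := deriv (fun s => u s x) t

/-- Second time derivative. -/
def dtt (u : ℝ → E3 → ℝ) (t : ℝ) (x : E3) : ℝ := deriv (fun s => dt u s x) t

/-- A classical solution of the Klein-Gordon-Zakharov system on a time interval `I`:
smooth in `(t,x)`, Schwartz in `x` with Schwartz seminorms locally bounded in `t`, and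
solving `∂ₜ²u - Δu + u = n u`, `α⁻² ∂ₜ²n - Δn = -Δ(u²)` pointwise. -/
structure IsKGZSol (α : ℝ) (I : Set ℝ) (u n : ℝ → E3 → ℝ) : Prop where
  smooth_u : ContDiffOn ℝ (⊤ : ℕ∞) (fun p : ℝ × E3 => u p.1 p.2) (I ×ˢ Set.univ)
  smooth_n : ContDiffOn ℝ (⊤ : ℕ∞) (fun p : ℝ × E3 => n p.1 p.2) (I ×ˢ Set.univ)
  schwartz_bdd : ∀ K : Set ℝ, K ⊆ I → IsCompact K → ∀ k m : ℕ, ∃ C : ℝ,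
    ∀ t ∈ K, ∀ x : E3,
      ‖x‖ ^ k * ‖iteratedFDeriv ℝ m (u t) x‖ ≤ C ∧
      ‖x‖ ^ k * ‖iteratedFDeriv ℝ m (dt u t) x‖ ≤ C ∧
      ‖x‖ ^ k * ‖iteratedFDeriv ℝ m (n t) x‖ ≤ C ∧
      ‖x‖ ^ k * ‖iteratedFDeriv ℝ m (dt n t) x‖ ≤ C
  eq_u : ∀ t ∈ I, ∀ x : E3, dtt u t x - lap (u t) x + u t x = n t x * u t x
  eq_n : ∀ t ∈ I, ∀ x : E3,
    (α ^ 2)⁻¹ * dtt n t x - lap (n t) x = - lap (fun y => (u t y) ^ 2) x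


lemma norm_gradient_eq (f : E3 → ℝ) (x : E3) : ‖gradient f x‖ = ‖fderiv ℝ f x‖ := by
  rw [gradient]
  exact LinearIsometryEquiv.norm_map _ _

lemma integrable_sq (φ : 𝓢(E3, ℝ)) : Integrable (fun x => (φ x) ^ 2) := by
  refine Integrable.mono' ((φ.integrable (μ := volume)).norm.const_mul
    (SchwartzMap.seminorm ℝ 0 0 φ)) ?_ ?_
  · exact (φ.continuous.pow 2).aestronglyMeasurable
  · refine Filter.Eventually.of_forall fun x => ?_
    have h := φ.norm_le_seminorm ℝ x
    calc ‖(φ x) ^ 2‖ = ‖φ x‖ * ‖φ x‖ := by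
          rw [sq, norm_mul]
      _ ≤ (SchwartzMap.seminorm ℝ 0 0 φ) * ‖φ x‖ :=
          mul_le_mul_of_nonneg_right h (norm_nonneg _)

lemma integrable_pow4 (φ : 𝓢(E3, ℝ)) : Integrable (fun x => (φ x) ^ 4) := by
  refine Integrable.mono' ((integrable_sq φ).const_mul
    ((SchwartzMap.seminorm ℝ 0 0 φ) ^ 2)) ?_ ?_
  · exact (φ.continuous.pow 4).aestronglyMeasurable
  · refine Filter.Eventually.of_forall fun x => ?_
    have h := φ.norm_le_seminorm ℝ x
    have h0 : (0:ℝ) ≤ ‖φ x‖ := norm_nonneg _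
    calc ‖(φ x) ^ 4‖ = ‖φ x‖ ^ 2 * ‖φ x‖ ^ 2 := by
          rw [norm_pow]; ring
      _ ≤ (SchwartzMap.seminorm ℝ 0 0 φ) ^ 2 * ‖φ x‖ ^ 2 := by
          gcongr
      _ = (SchwartzMap.seminorm ℝ 0 0 φ) ^ 2 * (φ x) ^ 2 := by
          rw [Real.norm_eq_abs, sq_abs]

lemma integrable_gradsq (φ : 𝓢(E3, ℝ)) :
    Integrable (fun x => ‖gradient (⇑φ) x‖ ^ 2) := by
  set ψ := SchwartzMap.fderivCLM ℝ E3 ℝ φ with hψ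
  have hψx : ∀ x, ‖gradient (⇑φ) x‖ = ‖ψ x‖ := by
    intro x
    rw [norm_gradient_eq, hψ, SchwartzMap.fderivCLM_apply]
  refine Integrable.mono' ((ψ.integrable (μ := volume)).norm.const_mul
    (SchwartzMap.seminorm ℝ 0 0 ψ)) ?_ ?_
  · have : Continuous fun x => ‖gradient (⇑φ) x‖ ^ 2 := by
      simp only [hψx]
      exact (ψ.continuous.norm).pow 2
    exact this.aestronglyMeasurable
  · refine Filter.Eventually.of_forall fun x => ?_
    have h := ψ.norm_le_seminorm ℝ x
    rw [norm_pow, norm_norm, hψx, sq]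
    exact mul_le_mul_of_nonneg_right h (norm_nonneg _)

def Sfun (φ : 𝓢(E3, ℝ)) : ℝ := ∫ x : E3, ((φ x) ^ 2 + ‖gradient (⇑φ) x‖ ^ 2)
def Qfun (φ : 𝓢(E3, ℝ)) : ℝ := ∫ x : E3, (φ x) ^ 4

lemma integrable_S (φ : 𝓢(E3, ℝ)) :
    Integrable (fun x => (φ x) ^ 2 + ‖gradient (⇑φ) x‖ ^ 2) :=
  (integrable_sq φ).add (integrable_gradsq φ)

lemma K0_eq (φ : 𝓢(E3, ℝ)) : K0fun ⇑φ = Sfun φ - Qfun φ := by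
  unfold K0fun Sfun Qfun
  rw [← integral_sub (integrable_S φ) (integrable_pow4 φ)]

lemma J_eq (φ : 𝓢(E3, ℝ)) : Jfun ⇑φ = Sfun φ / 2 - Qfun φ / 4 := by
  unfold Jfun Sfun Qfun
  rw [← integral_div, ← integral_div, ← integral_sub ((integrable_S φ).div_const 2)
    ((integrable_pow4 φ).div_const 4)]

lemma G0_eq (φ : 𝓢(E3, ℝ)) : G0fun ⇑φ = Sfun φ / 4 := by
  rw [G0fun, J_eq, K0_eq]; ring

lemma S_nonneg (φ : 𝓢(E3, ℝ)) : 0 ≤ Sfun φ :=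
  integral_nonneg fun x => by positivity

lemma S_pos (φ : 𝓢(E3, ℝ)) (hφ : φ ≠ 0) : 0 < Sfun φ := by
  have hsq : 0 < ∫ x : E3, (φ x) ^ 2 := by
    rw [integral_pos_iff_support_of_nonneg (fun x => by positivity) (integrable_sq φ)]
    have hss : Function.support (fun x => (φ x) ^ 2) = {x | φ x ≠ 0} := by
      ext x; simp [Function.support, pow_eq_zero_iff]
    rw [hss]
    have hopen : IsOpen {x : E3 | φ x ≠ 0} :=
      isOpen_ne.preimage φ.continuous
    have hne : {x : E3 | φ x ≠ 0}.Nonempty := by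
      by_contra h
      apply hφ
      ext x
      have := Set.not_nonempty_iff_eq_empty.mp h
      have : φ x = 0 := by
        by_contra hx
        exact absurd (Set.eq_empty_iff_forall_notMem.mp this x) (fun h2 => h2 hx)
      simpa using this
    exact hopen.measure_pos volume hne
  calc (0:ℝ) < ∫ x : E3, (φ x) ^ 2 := hsq
    _ ≤ Sfun φ := integral_mono (integrable_sq φ) (integrable_S φ)
        (fun x => le_add_of_nonneg_right (by positivity))

lemma S_smul (c : ℝ) (φ : 𝓢(E3, ℝ)) : Sfun (c • φ) = c ^ 2 * Sfun φ := by
  unfold Sfun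
  rw [← integral_const_mul]
  congr 1
  ext x
  have hcoe : ⇑(c • φ) = fun y => c • (φ y) := rfl
  have hgrad : ‖gradient (⇑(c • φ)) x‖ = |c| * ‖gradient (⇑φ) x‖ := by
    rw [norm_gradient_eq, norm_gradient_eq, hcoe,
      fderiv_fun_const_smul (φ.differentiableAt) c, norm_smul, Real.norm_eq_abs]
  rw [hgrad, hcoe]
  simp only [smul_eq_mul]
  simp only [mul_pow, sq_abs]
  ring

lemma Q_smul (c : ℝ) (φ : 𝓢(E3, ℝ)) : Qfun (c • φ) = c ^ 4 * Qfun φ := by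
  unfold Qfun
  rw [← integral_const_mul]
  congr 1
  ext x
  have hcoe : (c • φ) x = c * φ x := rfl
  rw [hcoe]; ring


theorem inf_J_eq_inf_G0 :
    sInf {c : ℝ | ∃ φ : 𝓢(E3, ℝ), φ ≠ 0 ∧ K0fun ⇑φ = 0 ∧ c = Jfun ⇑φ}
      = sInf {c : ℝ | ∃ φ : 𝓢(E3, ℝ), φ ≠ 0 ∧ K0fun ⇑φ ≤ 0 ∧ c = G0fun ⇑φ} := by
  set A := {c : ℝ | ∃ φ : 𝓢(E3, ℝ), φ ≠ 0 ∧ K0fun ⇑φ = 0 ∧ c = Jfun ⇑φ} with hA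
  set B := {c : ℝ | ∃ φ : 𝓢(E3, ℝ), φ ≠ 0 ∧ K0fun ⇑φ ≤ 0 ∧ c = G0fun ⇑φ} with hB
  have hAB : A ⊆ B := by
    rintro c ⟨φ, h1, h2, rfl⟩
    exact ⟨φ, h1, le_of_eq h2, by rw [G0fun, h2]; ring⟩
  have hB0 : ∀ c ∈ B, (0:ℝ) ≤ c := by
    rintro c ⟨φ, h1, h2, rfl⟩
    rw [G0_eq]
    linarith [S_nonneg φ]
  have hbddB : BddBelow B := ⟨0, hB0⟩
  have hbddA : BddBelow A := hbddB.mono hAB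
  have hBA : ∀ c ∈ B, ∃ a ∈ A, a ≤ c := by
    rintro c ⟨φ, hφ0, hK, rfl⟩
    have hS : 0 < Sfun φ := S_pos φ hφ0
    have hSQ : Sfun φ ≤ Qfun φ := by
      rw [K0_eq] at hK; linarith
    have hQ : 0 < Qfun φ := lt_of_lt_of_le hS hSQ
    set t := Real.sqrt (Sfun φ / Qfun φ) with ht
    have ht2 : t ^ 2 = Sfun φ / Qfun φ :=
      Real.sq_sqrt (le_of_lt (div_pos hS hQ))
    have ht0 : t ≠ 0 := by
      rw [ht]
      exact Real.sqrt_ne_zero'.mpr (div_pos hS hQ)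
    set ψ := t • φ with hψ
    have hψ0 : ψ ≠ 0 := smul_ne_zero ht0 hφ0
    have hKψ : K0fun ⇑ψ = 0 := by
      rw [K0_eq, hψ, S_smul, Q_smul, show (4:ℕ) = 2 * 2 by rfl, pow_mul, ht2]
      field_simp
      ring
    refine ⟨Jfun ⇑ψ, ⟨ψ, hψ0, hKψ, rfl⟩, ?_⟩
    have hJψ : Jfun ⇑ψ = Sfun ψ / 4 := by
      have := G0_eq ψ
      rw [G0fun, hKψ] at this
      linarith
    rw [hJψ, hψ, S_smul, ht2, G0_eq]
    rw [div_le_div_iff₀ (by norm_num) (by norm_num)]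
    have : Sfun φ / Qfun φ * Sfun φ ≤ Sfun φ := by
      rw [div_mul_eq_mul_div, div_le_iff₀ hQ]
      nlinarith
    linarith
  by_cases hBne : B.Nonempty
  · obtain ⟨c₀, hc₀⟩ := hBne
    obtain ⟨a₀, ha₀, _⟩ := hBA c₀ hc₀
    refine le_antisymm ?_ (csInf_le_csInf hbddB ⟨a₀, ha₀⟩ hAB)
    refine le_csInf ⟨c₀, hc₀⟩ fun c hc => ?_
    obtain ⟨a, ha, hac⟩ := hBA c hc
    exact (csInf_le hbddA ha).trans hac
  · have hBempty : B = ∅ := Set.not_nonempty_iff_eq_empty.mp hBne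
    have hAempty : A = ∅ := Set.eq_empty_of_subset_empty (hBempty ▸ hAB)
    rw [hAempty, hBempty]

end
end

section
/- The infimum of J(φ) over all nonzero real Schwartz functions φ on ℝ³ with K₂(φ) = 0 equals the infimum of G₂(φ) over all nonzero real Schwartz functions φ on ℝ³ with K₂(φ) ≤ 0. -/
open MeasureTheory SchwartzMap
open scoped FourierTransform RealInnerProductSpace ENNReal

noncomputable section

namespace KGZAux


def Ssq (φ : E3 → ℝ) : ℝ := ∫ x : E3, ‖gradient φ x‖ ^ 2
def Msq (φ : E3 → ℝ) : ℝ := ∫ x : E3, (φ x) ^ 2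
def P4 (φ : E3 → ℝ) : ℝ := ∫ x : E3, (φ x) ^ 4

lemma norm_gradient_eq (f : E3 → ℝ) (x : E3) :
    ‖gradient f x‖ = ‖fderiv ℝ f x‖ :=
  (InnerProductSpace.toDual ℝ E3).symm.norm_map _

lemma bounded {F : Type*} [NormedAddCommGroup F] [NormedSpace ℝ F] (φ : 𝓢(E3, F)) : ∃ C : ℝ, ∀ x, ‖φ x‖ ≤ C := by
  obtain ⟨C, -, hC⟩ := φ.decay 0 0
  exact ⟨C, fun x => by simpa [norm_iteratedFDeriv_zero] using hC x⟩

lemma int_sq (φ : 𝓢(E3, ℝ)) : Integrable (fun x => (φ x) ^ 2) (volume : Measure E3) := by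
  have h := φ.integrable (μ := (volume : Measure E3))
  have := h.bdd_mul φ.continuous.aestronglyMeasurable (Filter.Eventually.of_forall (bounded φ).choose_spec)
  simpa [pow_two] using this

lemma int_p4 (φ : 𝓢(E3, ℝ)) : Integrable (fun x => (φ x) ^ 4) (volume : Measure E3) := by
  obtain ⟨C, hC⟩ := bounded φ
  have h := (int_sq φ).bdd_mul
    (φ.continuous.aestronglyMeasurable.mul φ.continuous.aestronglyMeasurable) (f := fun x => φ x * φ x)
    (c := C * C) (Filter.Eventually.of_forall fun x => by
      have h0 : (0:ℝ) ≤ ‖φ x‖ := norm_nonneg _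
      calc ‖φ x * φ x‖ = ‖φ x‖ * ‖φ x‖ := norm_mul _ _
        _ ≤ C * C := mul_le_mul (hC x) (hC x) h0 ((h0.trans (hC x))))
  have : (fun x => (φ x * φ x) * (φ x)^2) = fun x => (φ x)^4 := by ext x; ring
  rwa [this] at h

lemma int_gradsq (φ : 𝓢(E3, ℝ)) :
    Integrable (fun x => ‖gradient (⇑φ) x‖ ^ 2) (volume : Measure E3) := by
  set Φ := SchwartzMap.fderivCLM ℝ (E := E3) (F := ℝ) φ with hΦ
  have hcoe : ∀ x, ‖gradient (⇑φ) x‖ = ‖Φ x‖ := fun x => by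
    rw [norm_gradient_eq]; simp [hΦ, SchwartzMap.fderivCLM_apply]
  obtain ⟨C, hC⟩ := bounded Φ
  have hint : Integrable (fun x => ‖Φ x‖) (volume : Measure E3) :=
    (Φ.integrable (μ := (volume : Measure E3))).norm
  have h := hint.bdd_mul (Φ.continuous.norm.aestronglyMeasurable) (f := fun x => ‖Φ x‖)
    (c := C) (Filter.Eventually.of_forall fun x => by simpa using hC x)
  have : (fun x => ‖Φ x‖ * ‖Φ x‖) = fun x => ‖gradient (⇑φ) x‖ ^ 2 := by
    ext x; rw [hcoe x]; ring
  rwa [this] at h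



lemma Jfun_eq (φ : 𝓢(E3, ℝ)) : Jfun ⇑φ = (Msq ⇑φ + Ssq ⇑φ) / 2 - P4 ⇑φ / 4 := by
  have hfi : Integrable (fun x : E3 => ((φ x) ^ 2 + ‖gradient (⇑φ) x‖ ^ 2) / 2) volume := by
    simpa using ((int_sq φ).add (int_gradsq φ)).div_const 2
  have hgi : Integrable (fun x : E3 => (φ x) ^ 4 / 4) volume := (int_p4 φ).div_const 4
  have hadd : (∫ x : E3, ((φ x) ^ 2 + ‖gradient (⇑φ) x‖ ^ 2)) = Msq ⇑φ + Ssq ⇑φ :=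
    integral_add (int_sq φ) (int_gradsq φ)
  rw [Jfun, integral_sub hfi hgi, integral_div, integral_div, hadd]
  rfl

lemma K2fun_eq (φ : 𝓢(E3, ℝ)) : K2fun ⇑φ = Ssq ⇑φ - (3 / 4) * P4 ⇑φ := by
  have hsub : (∫ x : E3, (‖gradient (⇑φ) x‖ ^ 2 - (3 / 4) * (φ x) ^ 4))
      = (∫ x : E3, ‖gradient (⇑φ) x‖ ^ 2) - ∫ x : E3, (3 / 4) * (φ x) ^ 4 :=
    integral_sub (int_gradsq φ) ((int_p4 φ).const_mul _)
  rw [K2fun, hsub, integral_const_mul]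
  rfl

lemma G2fun_eq (φ : 𝓢(E3, ℝ)) : G2fun ⇑φ = Ssq ⇑φ / 6 + Msq ⇑φ / 2 := by
  rw [G2fun, Jfun_eq, K2fun_eq]; ring

-- scaling
def scaleEquiv (c : ℝ) (hc : c ≠ 0) : E3 ≃L[ℝ] E3 :=
  (LinearEquiv.smulOfNeZero ℝ E3 c hc).toContinuousLinearEquiv

lemma scaleEquiv_apply (c : ℝ) (hc : c ≠ 0) (x : E3) : scaleEquiv c hc x = c • x := rfl

def scaleS (c : ℝ) (hc : c ≠ 0) (φ : 𝓢(E3, ℝ)) : 𝓢(E3, ℝ) :=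
  SchwartzMap.compCLMOfContinuousLinearEquiv ℝ (scaleEquiv c hc) φ

lemma scaleS_apply (c : ℝ) (hc : c ≠ 0) (φ : 𝓢(E3, ℝ)) (x : E3) :
    scaleS c hc φ x = φ (c • x) := rfl

lemma integral_scale (g : E3 → ℝ) (c : ℝ) :
    ∫ x : E3, g (c • x) = |(c ^ 3)⁻¹| * ∫ x : E3, g x := by
  have h := MeasureTheory.Measure.integral_comp_smul (volume : Measure E3) g c
  rw [finrank_euclideanSpace_fin] at h
  simpa [smul_eq_mul] using h

lemma grad_scale_norm (φ : 𝓢(E3, ℝ)) (c : ℝ) (x : E3) :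
    ‖gradient (fun y => φ (c • y)) x‖ = |c| * ‖gradient (⇑φ) (c • x)‖ := by
  rw [norm_gradient_eq, norm_gradient_eq]
  set L : E3 →L[ℝ] E3 := c • ContinuousLinearMap.id ℝ E3 with hL
  have hLx : ∀ y, L y = c • y := fun y => rfl
  have h1 : HasFDerivAt (fun y => φ (c • y)) ((fderiv ℝ (⇑φ) (c • x)).comp L) x := by
    have h2 : HasFDerivAt (⇑φ) (fderiv ℝ (⇑φ) (c • x)) (L x) := by
      rw [hLx]
      exact (φ.differentiable.differentiableAt).hasFDerivAt
    exact h2.comp x (L.hasFDerivAt)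
  rw [h1.fderiv]
  have h3 : (fderiv ℝ (⇑φ) (c • x)).comp L = c • fderiv ℝ (⇑φ) (c • x) := by
    ext v
    simp [hL, smul_eq_mul]
  rw [h3, norm_smul, Real.norm_eq_abs]

lemma Msq_scale (c : ℝ) (hc : c ≠ 0) (φ : 𝓢(E3, ℝ)) :
    Msq ⇑(scaleS c hc φ) = |(c ^ 3)⁻¹| * Msq ⇑φ :=
  integral_scale (fun y => (φ y) ^ 2) c

lemma P4_scale (c : ℝ) (hc : c ≠ 0) (φ : 𝓢(E3, ℝ)) :
    P4 ⇑(scaleS c hc φ) = |(c ^ 3)⁻¹| * P4 ⇑φ :=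
  integral_scale (fun y => (φ y) ^ 4) c

lemma Ssq_scale (c : ℝ) (hc : c ≠ 0) (φ : 𝓢(E3, ℝ)) :
    Ssq ⇑(scaleS c hc φ) = c ^ 2 * (|(c ^ 3)⁻¹| * Ssq ⇑φ) := by
  have hco : ⇑(scaleS c hc φ) = fun y => φ (c • y) := rfl
  have h1 : (fun x : E3 => ‖gradient (⇑(scaleS c hc φ)) x‖ ^ 2)
      = fun x => c ^ 2 * ((fun y => ‖gradient (⇑φ) y‖ ^ 2) (c • x)) := by
    ext x
    rw [hco, grad_scale_norm, mul_pow, sq_abs]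
  rw [Ssq, h1, integral_const_mul]
  congr 1
  exact integral_scale (fun y => ‖gradient (⇑φ) y‖ ^ 2) c



lemma exists_ne_zero {φ : 𝓢(E3, ℝ)} (hφ : φ ≠ 0) : ∃ x, φ x ≠ 0 := by
  by_contra h
  push_neg at h
  exact hφ (SchwartzMap.ext fun x => by simpa using h x)

lemma P4_pos (φ : 𝓢(E3, ℝ)) (hφ : φ ≠ 0) : 0 < P4 ⇑φ := by
  obtain ⟨x₀, hx₀⟩ := exists_ne_zero hφ
  rw [P4]
  refine (integral_pos_iff_support_of_nonneg (fun x => by positivity) (int_p4 φ)).mpr ?_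
  have hsupp : (Function.support fun x : E3 => (φ x) ^ 4) = (⇑φ) ⁻¹' {0}ᶜ := by
    ext x
    simp [Function.support, pow_eq_zero_iff]
  have hopen : IsOpen (Function.support fun x : E3 => (φ x) ^ 4) := by
    rw [hsupp]
    exact isOpen_compl_singleton.preimage φ.continuous
  refine hopen.measure_pos volume ⟨x₀, ?_⟩
  rw [hsupp]
  simpa using hx₀

lemma Msq_nonneg (φ : 𝓢(E3, ℝ)) : 0 ≤ Msq ⇑φ := integral_nonneg fun x => by positivity

lemma Ssq_nonneg (φ : 𝓢(E3, ℝ)) : 0 ≤ Ssq ⇑φ := integral_nonneg fun x => by positivity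

lemma Ssq_pos (φ : 𝓢(E3, ℝ)) (hφ : φ ≠ 0) : 0 < Ssq ⇑φ := by
  have hgrad_ne : ∃ x, gradient (⇑φ) x ≠ 0 := by
    by_contra h
    push_neg at h
    have hfd : ∀ x, fderiv ℝ (⇑φ) x = 0 := by
      intro x
      have hx := h x
      unfold gradient at hx
      simpa using (LinearIsometryEquiv.map_eq_zero_iff _).mp hx
    have hconst : ∀ x : E3, φ x = φ 0 := fun x =>
      is_const_of_fderiv_eq_zero (φ.differentiable) hfd x 0
    obtain ⟨C, hCpos, hC⟩ := φ.decay 1 0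
    have hdecay : ∀ x : E3, ‖x‖ * ‖φ 0‖ ≤ C := by
      intro x
      have := hC x
      rw [norm_iteratedFDeriv_zero] at this
      simpa [pow_one, hconst x] using this
    have hφ0 : φ 0 = 0 := by
      by_contra h0
      have hn : 0 < ‖φ 0‖ := norm_pos_iff.mpr h0
      set x : E3 := ((C + 1) / ‖φ 0‖) • EuclideanSpace.single (0 : Fin 3) (1 : ℝ) with hx
      have hxn : ‖x‖ = (C + 1) / ‖φ 0‖ := by
        rw [hx, norm_smul, EuclideanSpace.norm_single, norm_one, mul_one, Real.norm_eq_abs,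
          abs_of_pos (div_pos (by linarith) hn)]
      have := hdecay x
      rw [hxn, div_mul_cancel₀ _ (ne_of_gt hn)] at this
      linarith
    exact hφ (SchwartzMap.ext fun x => by rw [hconst x, hφ0]; simp)
  obtain ⟨x₀, hx₀⟩ := hgrad_ne
  have hgc : Continuous (gradient (⇑φ)) := by
    have h1 : Continuous (fun x => fderiv ℝ (⇑φ) x) :=
      (φ.smooth 1).continuous_fderiv (by simp)
    exact (InnerProductSpace.toDual ℝ E3).symm.continuous.comp h1
  rw [Ssq]
  refine (integral_pos_iff_support_of_nonneg (fun x => by positivity) (int_gradsq φ)).mpr ?_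
  have hsupp : (Function.support fun x : E3 => ‖gradient (⇑φ) x‖ ^ 2)
      = (gradient (⇑φ)) ⁻¹' {0}ᶜ := by
    ext x
    simp [Function.support, pow_eq_zero_iff, norm_eq_zero]
  have hopen : IsOpen (Function.support fun x : E3 => ‖gradient (⇑φ) x‖ ^ 2) := by
    rw [hsupp]
    exact isOpen_compl_singleton.preimage hgc
  refine hopen.measure_pos volume ⟨x₀, ?_⟩
  rw [hsupp]
  simpa using hx₀

lemma scaleS_ne_zero (c : ℝ) (hc : c ≠ 0) (φ : 𝓢(E3, ℝ)) (hφ : φ ≠ 0) :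
    scaleS c hc φ ≠ 0 := by
  intro h
  apply hφ
  refine SchwartzMap.ext fun x => ?_
  have h1 : scaleS c hc φ (c⁻¹ • x) = φ x := by
    rw [scaleS_apply, smul_smul, mul_inv_cancel₀ hc, one_smul]
  rw [h] at h1
  simpa using h1.symm



lemma key (φ : 𝓢(E3, ℝ)) (hφ : φ ≠ 0) (hK : K2fun ⇑φ ≤ 0) :
    ∃ ψ : 𝓢(E3, ℝ), ψ ≠ 0 ∧ K2fun ⇑ψ = 0 ∧ Jfun ⇑ψ ≤ G2fun ⇑φ := by
  have hS : 0 < Ssq ⇑φ := Ssq_pos φ hφ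
  have hP : 0 < P4 ⇑φ := P4_pos φ hφ
  have hM : 0 ≤ Msq ⇑φ := Msq_nonneg φ
  have hSP : Ssq ⇑φ ≤ 3 / 4 * P4 ⇑φ := by
    rw [K2fun_eq] at hK; linarith
  set q : ℝ := 3 / 4 * P4 ⇑φ / Ssq ⇑φ with hqdef
  have hq1 : 1 ≤ q := (one_le_div hS).mpr hSP
  have hq0 : 0 < q := lt_of_lt_of_le one_pos hq1
  set c : ℝ := Real.sqrt q with hcdef
  have hc2 : c ^ 2 = q := Real.sq_sqrt hq0.le
  have hc1 : 1 ≤ c := by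
    nlinarith [Real.sqrt_nonneg q]
  have hc0 : 0 < c := lt_of_lt_of_le one_pos hc1
  have hcne : c ≠ 0 := ne_of_gt hc0
  set ψ := scaleS c hcne φ with hψ
  have habs : |(c ^ 3)⁻¹| = (c ^ 3)⁻¹ := abs_of_pos (by positivity)
  have hSψ : Ssq ⇑ψ = c ^ 2 * ((c ^ 3)⁻¹ * Ssq ⇑φ) := by rw [hψ, Ssq_scale, habs]
  have hPψ : P4 ⇑ψ = (c ^ 3)⁻¹ * P4 ⇑φ := by rw [hψ, P4_scale, habs]
  have hMψ : Msq ⇑ψ = (c ^ 3)⁻¹ * Msq ⇑φ := by rw [hψ, Msq_scale, habs]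
  have hq : c ^ 2 * Ssq ⇑φ = 3 / 4 * P4 ⇑φ := by
    rw [hc2, hqdef]
    field_simp
  have hK2ψ : K2fun ⇑ψ = 0 := by
    rw [K2fun_eq, hSψ, hPψ]
    have e : c ^ 2 * ((c ^ 3)⁻¹ * Ssq ⇑φ) - 3 / 4 * ((c ^ 3)⁻¹ * P4 ⇑φ)
        = (c ^ 3)⁻¹ * (c ^ 2 * Ssq ⇑φ - 3 / 4 * P4 ⇑φ) := by ring
    rw [e, hq, sub_self, mul_zero]
  refine ⟨ψ, scaleS_ne_zero c hcne φ hφ, hK2ψ, ?_⟩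
  have hJψ : Jfun ⇑ψ = G2fun ⇑ψ := by rw [G2fun, hK2ψ]; ring
  rw [hJψ, G2fun_eq, G2fun_eq, hSψ, hMψ]
  have hcinv : c⁻¹ ≤ 1 := inv_le_one_of_one_le₀ hc1
  have hc3inv : (c ^ 3)⁻¹ ≤ 1 := inv_le_one_of_one_le₀ (one_le_pow₀ hc1)
  have e1 : c ^ 2 * ((c ^ 3)⁻¹ * Ssq ⇑φ) = c⁻¹ * Ssq ⇑φ := by
    field_simp
  rw [e1]
  have h1 : c⁻¹ * Ssq ⇑φ ≤ Ssq ⇑φ := by nlinarith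
  have h2 : (c ^ 3)⁻¹ * Msq ⇑φ ≤ Msq ⇑φ := by nlinarith
  linarith

end KGZAux

theorem inf_J_eq_inf_G2 :
    sInf {c : ℝ | ∃ φ : 𝓢(E3, ℝ), φ ≠ 0 ∧ K2fun ⇑φ = 0 ∧ c = Jfun ⇑φ}
      = sInf {c : ℝ | ∃ φ : 𝓢(E3, ℝ), φ ≠ 0 ∧ K2fun ⇑φ ≤ 0 ∧ c = G2fun ⇑φ} := by
  classical
  set A := {c : ℝ | ∃ φ : 𝓢(E3, ℝ), φ ≠ 0 ∧ K2fun ⇑φ = 0 ∧ c = Jfun ⇑φ} with hA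
  set B := {c : ℝ | ∃ φ : 𝓢(E3, ℝ), φ ≠ 0 ∧ K2fun ⇑φ ≤ 0 ∧ c = G2fun ⇑φ} with hB
  have hAB : A ⊆ B := by
    rintro c ⟨φ, hφ, hK, rfl⟩
    exact ⟨φ, hφ, le_of_eq hK, by rw [G2fun, hK]; ring⟩
  have hBlb : ∀ b ∈ B, (0 : ℝ) ≤ b := by
    rintro b ⟨φ, hφ, hK, rfl⟩
    rw [KGZAux.G2fun_eq]
    have h1 := KGZAux.Ssq_nonneg φ
    have h2 := KGZAux.Msq_nonneg φ
    linarith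
  have hbddB : BddBelow B := ⟨0, hBlb⟩
  have hbddA : BddBelow A := ⟨0, fun a ha => hBlb a (hAB ha)⟩
  by_cases hBne : B.Nonempty
  · obtain ⟨b₀, φ₀, hφ₀, hK₀, hb₀⟩ := hBne
    obtain ⟨ψ₀, hψ₀ne, hψ₀K, -⟩ := KGZAux.key φ₀ hφ₀ hK₀
    have hAne : A.Nonempty := ⟨Jfun ⇑ψ₀, ψ₀, hψ₀ne, hψ₀K, rfl⟩
    refine le_antisymm ?_ (csInf_le_csInf hbddB hAne hAB)
    refine le_csInf ⟨b₀, φ₀, hφ₀, hK₀, hb₀⟩ ?_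
    rintro b ⟨φ, hφ, hK, rfl⟩
    obtain ⟨ψ, hψne, hψK, hle⟩ := KGZAux.key φ hφ hK
    exact le_trans (csInf_le hbddA ⟨ψ, hψne, hψK, rfl⟩) hle
  · have hBe : B = ∅ := Set.not_nonempty_iff_eq_empty.mp hBne
    have hAe : A = ∅ := Set.eq_empty_of_subset_empty (hBe ▸ hAB)
    rw [hAe, hBe]


end
end

section
/- Let m_Q > 0 be as in the context. Let φ be a real Schwartz function on ℝ³ and ν ≥ 0 a real number with J(φ) + ν²/4 ≤ m_Q. If K₀(φ) ≥ 0 or K₂(φ) ≥ 0, then 4·K₂(φ) + ν² ≥ √6 · ν · ‖φ‖²_{L⁴(ℝ³)}. -/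
open MeasureTheory SchwartzMap
open scoped FourierTransform RealInnerProductSpace ENNReal

noncomputable section

namespace VarAux

lemma norm_gradient (h : E3 → ℝ) (x : E3) : ‖gradient h x‖ = ‖fderiv ℝ h x‖ := by
  unfold gradient
  exact LinearIsometryEquiv.norm_map _ _

def Ia (f : 𝓢(E3, ℝ)) : ℝ := ∫ x : E3, (f x) ^ 2
def Ib (f : 𝓢(E3, ℝ)) : ℝ := ∫ x : E3, ‖gradient (⇑f) x‖ ^ 2
def Iy (f : 𝓢(E3, ℝ)) : ℝ := ∫ x : E3, (f x) ^ 4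

lemma integrable_sq (f : 𝓢(E3, ℝ)) : Integrable (fun x : E3 => (f x) ^ 2) := by
  refine ((f.integrable (μ := volume)).norm.const_mul (SchwartzMap.seminorm ℝ 0 0 f)).mono'
    ((f.continuous.pow 2).aestronglyMeasurable) ?_
  filter_upwards with x
  have h1 : ‖f x‖ ≤ SchwartzMap.seminorm ℝ 0 0 f := SchwartzMap.norm_le_seminorm ℝ f x
  have h2 : ‖(f x) ^ 2‖ = ‖f x‖ * ‖f x‖ := by
    rw [norm_pow]; ring
  rw [h2]
  exact mul_le_mul_of_nonneg_right h1 (norm_nonneg _)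

lemma integrable_pow4 (f : 𝓢(E3, ℝ)) : Integrable (fun x : E3 => (f x) ^ 4) := by
  refine ((f.integrable (μ := volume)).norm.const_mul ((SchwartzMap.seminorm ℝ 0 0 f) ^ 3)).mono'
    ((f.continuous.pow 4).aestronglyMeasurable) ?_
  filter_upwards with x
  have h1 : ‖f x‖ ≤ SchwartzMap.seminorm ℝ 0 0 f := SchwartzMap.norm_le_seminorm ℝ f x
  have h3 : ‖f x‖ ^ 3 ≤ (SchwartzMap.seminorm ℝ 0 0 f) ^ 3 :=
    pow_le_pow_left₀ (norm_nonneg _) h1 3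
  have h2 : ‖(f x) ^ 4‖ = ‖f x‖ ^ 3 * ‖f x‖ := by
    rw [norm_pow]; ring
  rw [h2]
  exact mul_le_mul_of_nonneg_right h3 (norm_nonneg _)

lemma integrable_grad_sq (f : 𝓢(E3, ℝ)) :
    Integrable (fun x : E3 => ‖gradient (⇑f) x‖ ^ 2) := by
  set g : 𝓢(E3, E3 →L[ℝ] ℝ) := SchwartzMap.fderivCLM ℝ E3 ℝ f with hg
  have hgeq : (fun x : E3 => ‖gradient (⇑f) x‖ ^ 2) = fun x => ‖g x‖ ^ 2 := by
    funext x
    rw [norm_gradient, hg, SchwartzMap.fderivCLM_apply]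
  rw [hgeq]
  refine ((g.integrable (μ := volume)).norm.const_mul (SchwartzMap.seminorm ℝ 0 0 g)).mono'
    ((g.continuous.norm.pow 2).aestronglyMeasurable) ?_
  filter_upwards with x
  have h1 : ‖g x‖ ≤ SchwartzMap.seminorm ℝ 0 0 g := SchwartzMap.norm_le_seminorm ℝ g x
  have h2 : ‖‖g x‖ ^ 2‖ = ‖g x‖ * ‖g x‖ := by
    rw [norm_pow, norm_norm]; ring
  rw [h2]
  exact mul_le_mul_of_nonneg_right h1 (norm_nonneg _)

lemma Ia_nonneg (f : 𝓢(E3, ℝ)) : 0 ≤ Ia f :=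
  integral_nonneg fun x => by positivity
lemma Ib_nonneg (f : 𝓢(E3, ℝ)) : 0 ≤ Ib f :=
  integral_nonneg fun x => by positivity
lemma Iy_nonneg (f : 𝓢(E3, ℝ)) : 0 ≤ Iy f :=
  integral_nonneg fun x => by positivity

lemma Jfun_eq (f : 𝓢(E3, ℝ)) : Jfun ⇑f = (Ia f + Ib f) / 2 - Iy f / 4 := by
  have h1 : Integrable (fun x : E3 => ((f x) ^ 2 + ‖gradient (⇑f) x‖ ^ 2) / 2) :=
    ((integrable_sq f).add (integrable_grad_sq f)).div_const 2
  have h2 : Integrable (fun x : E3 => (f x) ^ 4 / 4) := (integrable_pow4 f).div_const 4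
  rw [Jfun, integral_sub h1 h2, integral_div, integral_div,
    integral_add (integrable_sq f) (integrable_grad_sq f)]
  rfl

lemma K0fun_eq (f : 𝓢(E3, ℝ)) : K0fun ⇑f = Ia f + Ib f - Iy f := by
  have h1 : Integrable (fun x : E3 => (f x) ^ 2 + ‖gradient (⇑f) x‖ ^ 2) :=
    (integrable_sq f).add (integrable_grad_sq f)
  rw [K0fun, integral_sub h1 (integrable_pow4 f),
    integral_add (integrable_sq f) (integrable_grad_sq f)]
  rfl

lemma K2fun_eq (f : 𝓢(E3, ℝ)) : K2fun ⇑f = Ib f - (3 / 4) * Iy f := by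
  have h2 : Integrable (fun x : E3 => (3 / 4 : ℝ) * (f x) ^ 4) := (integrable_pow4 f).const_mul _
  rw [K2fun, integral_sub (integrable_grad_sq f) h2, integral_const_mul]
  rfl

/-- Dilation as a continuous linear equivalence. -/
def dilE (r : ℝ) (hr : r ≠ 0) : E3 ≃L[ℝ] E3 :=
  (LinearEquiv.smulOfNeZero ℝ E3 r hr).toContinuousLinearEquiv

/-- The rescaled function `x ↦ c * f (r • x)` as a Schwartz map. -/
def scaled (c r : ℝ) (hr : r ≠ 0) (f : 𝓢(E3, ℝ)) : 𝓢(E3, ℝ) :=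
  c • (SchwartzMap.compCLMOfContinuousLinearEquiv ℝ (dilE r hr) f)

lemma coe_scaled (c r : ℝ) (hr : r ≠ 0) (f : 𝓢(E3, ℝ)) :
    ⇑(scaled c r hr f) = fun x => c * f (r • x) := rfl

lemma finrank_E3 : Module.finrank ℝ E3 = 3 := by
  simp [finrank_euclideanSpace]

lemma comp_smul_integral (g : E3 → ℝ) {r : ℝ} (hr : 0 < r) :
    ∫ x : E3, g (r • x) = (r ^ 3)⁻¹ * ∫ x : E3, g x := by
  rw [MeasureTheory.Measure.integral_comp_smul volume g r, finrank_E3, smul_eq_mul,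
    abs_of_pos (by positivity)]

lemma Ia_scaled (c : ℝ) {r : ℝ} (hr : 0 < r) (f : 𝓢(E3, ℝ)) :
    Ia (scaled c r hr.ne' f) = c ^ 2 * (r ^ 3)⁻¹ * Ia f := by
  rw [Ia, coe_scaled]
  simp only [mul_pow]
  rw [integral_const_mul, comp_smul_integral (fun z => f z ^ 2) hr, Ia]
  ring

lemma Iy_scaled (c : ℝ) {r : ℝ} (hr : 0 < r) (f : 𝓢(E3, ℝ)) :
    Iy (scaled c r hr.ne' f) = c ^ 4 * (r ^ 3)⁻¹ * Iy f := by
  rw [Iy, coe_scaled]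
  simp only [mul_pow]
  rw [integral_const_mul, comp_smul_integral (fun z => f z ^ 4) hr, Iy]
  ring

lemma fderiv_scaled (c r : ℝ) (hr : r ≠ 0) (f : 𝓢(E3, ℝ)) (x : E3) :
    fderiv ℝ (⇑(scaled c r hr f)) x = (c * r) • fderiv ℝ (⇑f) (r • x) := by
  have hL : HasFDerivAt (fun y : E3 => r • y) (r • ContinuousLinearMap.id ℝ E3) x := by
    have := (r • ContinuousLinearMap.id ℝ E3).hasFDerivAt (x := x)
    convert this using 2
    simp
  have hf : HasFDerivAt (⇑f) (fderiv ℝ (⇑f) (r • x)) (r • x) :=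
    (f.differentiable (r • x)).hasFDerivAt
  have hcomp := hf.comp x hL
  have hsmul := hcomp.const_smul c
  have heq : (fun x : E3 => c • (⇑f ∘ fun y : E3 => r • y) x) = ⇑(scaled c r hr f) := by
    funext z
    rw [coe_scaled]
    simp [Function.comp]
  have h2 : (fderiv ℝ (⇑f) (r • x)).comp (r • ContinuousLinearMap.id ℝ E3)
      = r • fderiv ℝ (⇑f) (r • x) := by
    ext v
    simp
  rw [← heq] at *
  have := hsmul.fderiv
  refine this.trans ?_
  rw [h2, smul_smul]

lemma grad_norm_scaled (c r : ℝ) (hr : r ≠ 0) (f : 𝓢(E3, ℝ)) (x : E3) :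
    ‖gradient (⇑(scaled c r hr f)) x‖ = |c| * |r| * ‖gradient (⇑f) (r • x)‖ := by
  rw [norm_gradient, norm_gradient, fderiv_scaled, norm_smul]
  simp [abs_mul]

lemma Ib_scaled (c : ℝ) {r : ℝ} (hr : 0 < r) (f : 𝓢(E3, ℝ)) :
    Ib (scaled c r hr.ne' f) = c ^ 2 * r ^ 2 * (r ^ 3)⁻¹ * Ib f := by
  rw [Ib]
  have : (fun x : E3 => ‖gradient (⇑(scaled c r hr.ne' f)) x‖ ^ 2)
      = fun x : E3 => c ^ 2 * r ^ 2 * ((fun z => ‖gradient (⇑f) z‖ ^ 2) (r • x)) := by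
    funext x
    rw [grad_norm_scaled]
    simp only [mul_pow]
    rw [sq_abs, sq_abs]
  rw [this, integral_const_mul, comp_smul_integral (fun z => ‖gradient (⇑f) z‖ ^ 2) hr, Ib]
  ring

lemma scaled_ne_zero {c r : ℝ} (hc : c ≠ 0) (hr : r ≠ 0) (f : 𝓢(E3, ℝ)) {x₀ : E3}
    (hx₀ : f x₀ ≠ 0) : scaled c r hr f ≠ 0 := by
  intro h0
  have h1 : scaled c r hr f (r⁻¹ • x₀) = 0 := by rw [h0]; rfl
  rw [coe_scaled] at h1
  simp only at h1
  rw [smul_inv_smul₀ hr] at h1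
  exact (mul_ne_zero hc hx₀) h1

lemma Ib_pos (f : 𝓢(E3, ℝ)) {x₀ : E3} (hx₀ : f x₀ ≠ 0) : 0 < Ib f := by
  rcases (Ib_nonneg f).lt_or_eq with h | h
  · exact h
  exfalso
  have hint : ∫ x : E3, ‖gradient (⇑f) x‖ ^ 2 = 0 := h.symm
  have hcont : Continuous fun x : E3 => ‖gradient (⇑f) x‖ ^ 2 := by
    have : (fun x : E3 => ‖gradient (⇑f) x‖ ^ 2)
        = fun x => ‖(SchwartzMap.fderivCLM ℝ E3 ℝ f) x‖ ^ 2 := by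
      funext x; rw [norm_gradient, SchwartzMap.fderivCLM_apply]
    rw [this]
    exact ((SchwartzMap.fderivCLM ℝ E3 ℝ f).continuous.norm.pow 2)
  have hae : (fun x : E3 => ‖gradient (⇑f) x‖ ^ 2) =ᵐ[volume] 0 :=
    (integral_eq_zero_iff_of_nonneg (fun x => by positivity) (integrable_grad_sq f)).1 hint
  have hzero : ∀ x : E3, ‖gradient (⇑f) x‖ ^ 2 = 0 := by
    have := (Continuous.ae_eq_iff_eq volume hcont continuous_const).1 hae
    intro x; exact congrFun this x
  have hfd : ∀ x : E3, fderiv ℝ (⇑f) x = 0 := by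
    intro x
    have h1 : ‖fderiv ℝ (⇑f) x‖ = 0 := by
      have := hzero x
      rw [norm_gradient] at this
      nlinarith [norm_nonneg (fderiv ℝ (⇑f) x)]
    exact norm_eq_zero.1 h1
  have hconst : ∀ x : E3, f x = f x₀ := fun x =>
    is_const_of_fderiv_eq_zero f.differentiable hfd x x₀
  obtain ⟨C, hC⟩ := f.decay' 1 0
  have hC0 : 0 ≤ C := le_trans (by positivity) (hC 0)
  set R : ℝ := (C + 1) / |f x₀| with hR
  have hRpos : 0 < R := by
    apply div_pos (by linarith) (abs_pos.2 hx₀)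
  set x : E3 := EuclideanSpace.single (0 : Fin 3) R with hx
  have hnx : ‖x‖ = R := by
    rw [hx, EuclideanSpace.norm_single, Real.norm_eq_abs, abs_of_pos hRpos]
  have hdecay : ‖x‖ ^ 1 * ‖f x‖ ≤ C := by
    have := hC x
    rwa [norm_iteratedFDeriv_zero] at this
  rw [pow_one, hnx, hconst x, Real.norm_eq_abs] at hdecay
  rw [hR] at hdecay
  rw [div_mul_cancel₀ _ (abs_ne_zero.2 hx₀)] at hdecay
  linarith

lemma key_ineq {k y t : ℝ} (hk : 0 ≤ k) (hy : 0 < y) (ht : 0 ≤ t)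
    (hC : 54 * y ^ 2 * t ≤ k ^ 2 * (k + 9 * y)) : 6 * y * t ≤ (k + t) ^ 2 := by
  rcases le_total (2 * k) (3 * y) with h | h
  · have hD : 0 ≤ k ^ 2 * (k + 9 * y) - 54 * y ^ 2 * t := by linarith
    have hS : 0 ≤ 54 * y ^ 2 * (6 * y - 2 * k) - k ^ 2 * (k + 9 * y) - 54 * y ^ 2 * t := by
      nlinarith [mul_nonneg (sub_nonneg.2 h) (sq_nonneg k),
        mul_nonneg (sub_nonneg.2 h) (mul_pos hy hy).le,
        mul_nonneg hk (mul_pos hy hy).le, mul_nonneg (mul_nonneg hk hk) hk]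
    have hid : 2916 * y ^ 4 * ((k + t) ^ 2 - 6 * y * t)
        = (k ^ 2 * (k + 9 * y) - 54 * y ^ 2 * t)
          * (54 * y ^ 2 * (6 * y - 2 * k) - k ^ 2 * (k + 9 * y) - 54 * y ^ 2 * t)
          + (648 * k ^ 3 * y ^ 3 + 189 * k ^ 4 * y ^ 2 + 18 * k ^ 5 * y + k ^ 6) := by
      ring
    have hP : 0 ≤ 648 * k ^ 3 * y ^ 3 + 189 * k ^ 4 * y ^ 2 + 18 * k ^ 5 * y + k ^ 6 := by
      positivity
    nlinarith [mul_nonneg hD hS, pow_pos hy 4, hid]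
  · nlinarith [sq_nonneg (t - 3 * y / 2), mul_nonneg ht (sub_nonneg.2 h),
      mul_nonneg (sub_nonneg.2 h) (sub_nonneg.2 h), mul_nonneg hk hy.le]

lemma sqrt_le_of_sq {L R : ℝ} (hL : 0 ≤ L) (hR : 0 ≤ R) (h : L ^ 2 ≤ R ^ 2) : L ≤ R := by
  nlinarith

end VarAux

set_option maxHeartbeats 1600000 in
theorem variational_estimate_nonneg    (m_Q : ℝ) (hmQ_pos : 0 < m_Q)
    (hmQ_K0 : ∀ ψ : 𝓢(E3, ℝ), ψ ≠ 0 → K0fun ⇑ψ = 0 → m_Q ≤ Jfun ⇑ψ)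
    (hmQ_K2 : ∀ ψ : 𝓢(E3, ℝ), ψ ≠ 0 → K2fun ⇑ψ = 0 → m_Q ≤ Jfun ⇑ψ)
    (φ : 𝓢(E3, ℝ)) (ν : ℝ) (hν : 0 ≤ ν)
    (hJ : Jfun ⇑φ + ν ^ 2 / 4 ≤ m_Q)
    (hK : 0 ≤ K0fun ⇑φ ∨ 0 ≤ K2fun ⇑φ) :
    Real.sqrt 6 * ν * L4sq ⇑φ ≤ 4 * K2fun ⇑φ + ν ^ 2 := by
  classical
  have hJφ := VarAux.Jfun_eq φ
  have hK2φ := VarAux.K2fun_eq φ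
  have hK0φ := VarAux.K0fun_eq φ
  have hann := VarAux.Ia_nonneg φ
  have hbnn := VarAux.Ib_nonneg φ
  have hynn := VarAux.Iy_nonneg φ
  have hL4 : L4sq ⇑φ = Real.sqrt (VarAux.Iy φ) := by
    rw [Real.sqrt_eq_rpow]
    rfl
  rcases hynn.lt_or_eq with hy | hy
  swap
  · -- Iy φ = 0
    rw [hL4, ← hy, Real.sqrt_zero, mul_zero]
    rw [hK2φ, ← hy]
    nlinarith [hbnn, sq_nonneg ν]
  -- Iy φ > 0
  have hx₀ : ∃ x₀ : E3, φ x₀ ≠ 0 := by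
    by_contra hall
    push_neg at hall
    have : VarAux.Iy φ = 0 := by
      rw [VarAux.Iy]
      simp [hall]
    linarith
  obtain ⟨x₀, hx₀⟩ := hx₀
  have hb : 0 < VarAux.Ib φ := VarAux.Ib_pos φ hx₀
  set a := VarAux.Ia φ with ha
  set b := VarAux.Ib φ with hbdef
  set y := VarAux.Iy φ with hydef
  clear_value a b y
  by_cases hK2 : 0 ≤ K2fun ⇑φ
  · -- main case : K₂ ≥ 0
    have hrpos : 0 < 4 * b / (3 * y) := div_pos (by linarith) (by linarith)
    set r : ℝ := 4 * b / (3 * y) with hrdef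
    set c : ℝ := r * Real.sqrt r with hcdef
    have hc2 : c ^ 2 = r ^ 3 := by
      rw [hcdef, mul_pow, Real.sq_sqrt hrpos.le]; ring
    have hcpos : 0 < c := mul_pos hrpos (Real.sqrt_pos.2 hrpos)
    set ψ := VarAux.scaled c r hrpos.ne' φ with hψ
    have hr3ne : (r : ℝ) ^ 3 ≠ 0 := pow_ne_zero 3 hrpos.ne'
    have hIaψ : VarAux.Ia ψ = a := by
      rw [hψ, VarAux.Ia_scaled c hrpos φ, hc2, mul_inv_cancel₀ hr3ne, one_mul, ha]
    have hIbψ : VarAux.Ib ψ = r ^ 2 * b := by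
      rw [hψ, VarAux.Ib_scaled c hrpos φ, hc2, ← hbdef]
      field_simp
    have hIyψ : VarAux.Iy ψ = r ^ 3 * y := by
      rw [hψ, VarAux.Iy_scaled c hrpos φ, show c ^ 4 = (c ^ 2) ^ 2 by ring, hc2, ← hydef]
      field_simp
    have hK2ψ : K2fun ⇑ψ = 0 := by
      rw [VarAux.K2fun_eq ψ, hIbψ, hIyψ, hrdef]
      field_simp
      ring
    have hψne : ψ ≠ 0 := VarAux.scaled_ne_zero hcpos.ne' hrpos.ne' φ hx₀
    have hm := hmQ_K2 ψ hψne hK2ψ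
    rw [VarAux.Jfun_eq ψ, hIaψ, hIbψ, hIyψ] at hm
    rw [hJφ] at hJ
    clear hψne hK2ψ hIaψ hIbψ hIyψ hψ ψ hc2 hcpos hcdef c hr3ne
    have hchain : b / 2 - y / 4 + ν ^ 2 / 4 ≤ r ^ 2 * b / 2 - r ^ 3 * y / 4 := by linarith
    have hval : r ^ 2 * b / 2 - r ^ 3 * y / 4 = 8 * b ^ 3 / (27 * y ^ 2) := by
      rw [hrdef]
      field_simp
      ring
    rw [hval] at hchain
    have hq : (b / 2 - y / 4 + ν ^ 2 / 4) * (27 * y ^ 2) ≤ 8 * b ^ 3 :=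
      (le_div_iff₀ (by nlinarith [hy] : (0:ℝ) < 27 * y ^ 2)).1 hchain
    have hk : 0 ≤ 4 * b - 3 * y := by
      rw [hK2φ] at hK2; linarith
    have hC : 54 * y ^ 2 * ν ^ 2
        ≤ (4 * b - 3 * y) ^ 2 * ((4 * b - 3 * y) + 9 * y) := by linarith [hq]
    have hkey := VarAux.key_ineq hk hy (sq_nonneg ν) hC
    rw [hL4, hK2φ]
    have hLnn : 0 ≤ Real.sqrt 6 * ν * Real.sqrt y :=
      mul_nonneg (mul_nonneg (Real.sqrt_nonneg 6) hν) (Real.sqrt_nonneg y)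
    have hRnn : 0 ≤ (4 * b - 3 * y) + ν ^ 2 := by nlinarith [hk, sq_nonneg ν]
    have hsq : (Real.sqrt 6 * ν * Real.sqrt y) ^ 2 = 6 * y * ν ^ 2 := by
      rw [mul_pow, mul_pow, Real.sq_sqrt (by norm_num : (0:ℝ) ≤ 6), Real.sq_sqrt hy.le]
      ring
    have hfin := VarAux.sqrt_le_of_sq hLnn hRnn (by rw [hsq]; exact hkey)
    linarith
  · -- K₂ < 0, K₀ ≥ 0 : contradiction
    exfalso
    have hK0 : 0 ≤ K0fun ⇑φ := hK.resolve_right hK2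
    push_neg at hK2
    rw [hK0φ] at hK0
    rw [hK2φ] at hK2
    have hτpos : 0 < 4 * b / (3 * y) := div_pos (by linarith) (by linarith)
    set τ : ℝ := 4 * b / (3 * y) with hτdef
    have hτ1 : τ < 1 := by
      rw [hτdef, div_lt_one (by linarith)]
      linarith
    set lam : ℝ := Real.sqrt τ with hlamdef
    have hlam2 : lam ^ 2 = τ := Real.sq_sqrt hτpos.le
    have hlampos : 0 < lam := Real.sqrt_pos.2 hτpos
    set ψ := VarAux.scaled lam 1 one_pos.ne' φ with hψ
    have hIaψ : VarAux.Ia ψ = lam ^ 2 * a := by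
      rw [hψ, VarAux.Ia_scaled lam one_pos φ, ← ha]
      norm_num
    have hIbψ : VarAux.Ib ψ = lam ^ 2 * b := by
      rw [hψ, VarAux.Ib_scaled lam one_pos φ, ← hbdef]
      norm_num
    have hIyψ : VarAux.Iy ψ = lam ^ 4 * y := by
      rw [hψ, VarAux.Iy_scaled lam one_pos φ, ← hydef]
      norm_num
    have hlam4 : lam ^ 4 = τ ^ 2 := by
      rw [show lam ^ 4 = (lam ^ 2) ^ 2 by ring, hlam2]
    have hK2ψ : K2fun ⇑ψ = 0 := by
      rw [VarAux.K2fun_eq ψ, hIbψ, hIyψ, hlam2, hlam4, hτdef]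
      field_simp
      ring
    have hψne : ψ ≠ 0 := VarAux.scaled_ne_zero hlampos.ne' one_pos.ne' φ hx₀
    have hm := hmQ_K2 ψ hψne hK2ψ
    rw [VarAux.Jfun_eq ψ, hIaψ, hIbψ, hIyψ, hlam2, hlam4] at hm
    rw [hJφ] at hJ
    clear hψne hK2ψ hIaψ hIbψ hIyψ hψ ψ hlam2 hlam4 hlampos hlamdef lam
    nlinarith [mul_nonneg (sub_pos.2 hτ1).le (sub_nonneg.2 hK0),
      mul_pos (mul_pos (sub_pos.2 hτ1) (sub_pos.2 hτ1)) hy, sq_nonneg ν]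

end
end

section
/- Let α > 0 and let m_Q > 0 be as in the context. There exist constants 0 < c ≤ C, depending only on α and m_Q, with the following property: whenever u, w, n, v are real Schwartz functions on ℝ³ with K₂(u) ≥ 0 and E(u, w, n, v) < m_Q, setting N := ∫_{ℝ³}(|u|² + |∇u|² + |w|² + |n|²) dx + ‖v‖²_{Ḣ⁻¹}, one has c·N ≤ E(u, w, n, v) ≤ C·N. -/
open MeasureTheory SchwartzMap
open scoped FourierTransform RealInnerProductSpace ENNReal

noncomputable section

lemma schwartz_bdd' {V : Type*} [NormedAddCommGroup V] [NormedSpace ℝ V]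
    (f : 𝓢(E3, V)) : ∃ C : ℝ, 0 ≤ C ∧ ∀ x, ‖f x‖ ≤ C := by
  obtain ⟨C, hC0, hC⟩ := f.decay 0 0
  refine ⟨C, hC0.le, fun x => ?_⟩
  have := hC x
  simpa using this

lemma integrable_norm_sq {V : Type*} [NormedAddCommGroup V] [NormedSpace ℝ V]
    (f : 𝓢(E3, V)) : Integrable (fun x => ‖f x‖ ^ 2) := by
  obtain ⟨C, hC0, hC⟩ := schwartz_bdd' f
  refine Integrable.mono' ((f.integrable.norm).const_mul C)
    ((f.continuous.norm.pow 2).aestronglyMeasurable) ?_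
  filter_upwards with x
  rw [Real.norm_eq_abs, abs_of_nonneg (by positivity)]
  calc ‖f x‖ ^ 2 = ‖f x‖ * ‖f x‖ := by ring
    _ ≤ C * ‖f x‖ := mul_le_mul_of_nonneg_right (hC x) (norm_nonneg _)

lemma integrable_bdd_mul (φ : E3 → ℝ) (hc : Continuous φ)
    (hb : ∃ C, ∀ x, ‖φ x‖ ≤ C) (f : 𝓢(E3, ℝ)) :
    Integrable (fun x => φ x * f x) :=
  f.integrable.bdd_mul hc.aestronglyMeasurable (Filter.Eventually.of_forall hb.choose_spec)

lemma integrable_grad_sq (f : 𝓢(E3, ℝ)) :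
    Integrable (fun x => ‖gradient (⇑f) x‖ ^ 2) := by
  have h := integrable_norm_sq (SchwartzMap.fderivCLM ℝ E3 ℝ f)
  refine h.congr (Filter.Eventually.of_forall fun x => ?_)
  simp only [SchwartzMap.fderivCLM_apply, ← norm_gradient_eq]


set_option maxHeartbeats 1000000 in
theorem energy_equiv_norm    (m_Q : ℝ) (hmQ_pos : 0 < m_Q)
    (hmQ_K0 : ∀ ψ : 𝓢(E3, ℝ), ψ ≠ 0 → K0fun ⇑ψ = 0 → m_Q ≤ Jfun ⇑ψ)
    (hmQ_K2 : ∀ ψ : 𝓢(E3, ℝ), ψ ≠ 0 → K2fun ⇑ψ = 0 → m_Q ≤ Jfun ⇑ψ) (α : ℝ) (hα : 0 < α) :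
    ∃ c C : ℝ, 0 < c ∧ c ≤ C ∧
      ∀ u w n v : 𝓢(E3, ℝ), 0 ≤ K2fun ⇑u → Efun α ⇑u ⇑w ⇑n ⇑v < m_Q →
        c * ((∫ x : E3, ((u x) ^ 2 + ‖gradient ⇑u x‖ ^ 2 + (w x) ^ 2 + (n x) ^ 2)) + Hm1sq ⇑v)
            ≤ Efun α ⇑u ⇑w ⇑n ⇑v ∧
        Efun α ⇑u ⇑w ⇑n ⇑v
            ≤ C * ((∫ x : E3, ((u x) ^ 2 + ‖gradient ⇑u x‖ ^ 2 + (w x) ^ 2 + (n x) ^ 2)) + Hm1sq ⇑v) := by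
  have hα2 : (0:ℝ) < (α ^ 2)⁻¹ := by positivity
  refine ⟨min (1/22) ((α ^ 2)⁻¹/4), max (5/6) ((α ^ 2)⁻¹/4),
    lt_min (by norm_num) (by positivity),
    (min_le_right _ _).trans (le_max_right _ _), ?_⟩
  intro u w n v hK2 _hlt
  obtain ⟨Cu, hCu0, hCu⟩ := schwartz_bdd' u
  obtain ⟨Cn, hCn0, hCn⟩ := schwartz_bdd' n
  -- integrabilities
  have h_u2 : Integrable (fun x => (u x) ^ 2) := by
    have := integrable_bdd_mul (⇑u) u.continuous ⟨Cu, hCu⟩ u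
    refine this.congr (Filter.Eventually.of_forall fun x => ?_); ring
  have h_w2 : Integrable (fun x => (w x) ^ 2) := by
    obtain ⟨Cw, _, hCw⟩ := schwartz_bdd' w
    have := integrable_bdd_mul (⇑w) w.continuous ⟨Cw, hCw⟩ w
    refine this.congr (Filter.Eventually.of_forall fun x => ?_); ring
  have h_n2 : Integrable (fun x => (n x) ^ 2) := by
    have := integrable_bdd_mul (⇑n) n.continuous ⟨Cn, hCn⟩ n
    refine this.congr (Filter.Eventually.of_forall fun x => ?_); ring
  have h_g2 : Integrable (fun x => ‖gradient (⇑u) x‖ ^ 2) := integrable_grad_sq u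
  have h_u4 : Integrable (fun x => (u x) ^ 4) := by
    have hb : ∀ x, ‖(u x) ^ 3‖ ≤ Cu ^ 3 := by
      intro x
      rw [norm_pow]
      exact pow_le_pow_left₀ (norm_nonneg _) (hCu x) 3
    have := integrable_bdd_mul (fun x => (u x) ^ 3) (u.continuous.pow 3) ⟨Cu ^ 3, hb⟩ u
    refine this.congr (Filter.Eventually.of_forall fun x => ?_); ring
  have h_nu2 : Integrable (fun x => n x * (u x) ^ 2) := by
    have hb : ∀ x, ‖n x * u x‖ ≤ Cn * Cu := by
      intro x
      rw [norm_mul]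
      exact mul_le_mul (hCn x) (hCu x) (norm_nonneg _) hCn0
    have := integrable_bdd_mul (fun x => n x * u x) (n.continuous.mul u.continuous)
      ⟨Cn * Cu, hb⟩ u
    refine this.congr (Filter.Eventually.of_forall fun x => ?_); ring
  have h_m : Integrable (fun x => (n x - (u x) ^ 2) ^ 2) := by
    have he : (fun x : E3 => (n x - (u x) ^ 2) ^ 2)
        = fun x => ((n x) ^ 2 - 2 * (n x * (u x) ^ 2)) + (u x) ^ 4 := by
      funext x; ring
    rw [he]
    exact (h_n2.sub (h_nu2.const_mul 2)).add h_u4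
  -- abbreviations
  set A := ∫ x : E3, (u x) ^ 2 with hA_def
  set B := ∫ x : E3, ‖gradient (⇑u) x‖ ^ 2 with hB_def
  set W := ∫ x : E3, (w x) ^ 2 with hW_def
  set Nn := ∫ x : E3, (n x) ^ 2 with hNn_def
  set P := ∫ x : E3, (u x) ^ 4 with hP_def
  set X := ∫ x : E3, n x * (u x) ^ 2 with hX_def
  set M := ∫ x : E3, (n x - (u x) ^ 2) ^ 2 with hM_def
  set Hm := Hm1sq ⇑v with hHm_def
  -- nonnegativity
  have hA : 0 ≤ A := integral_nonneg fun x => sq_nonneg _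
  have hB : 0 ≤ B := integral_nonneg fun x => sq_nonneg _
  have hW : 0 ≤ W := integral_nonneg fun x => sq_nonneg _
  have hNn : 0 ≤ Nn := integral_nonneg fun x => sq_nonneg _
  have hP : 0 ≤ P := integral_nonneg fun x => by positivity
  have hM : 0 ≤ M := integral_nonneg fun x => sq_nonneg _
  have hHm : 0 ≤ Hm := integral_nonneg fun ξ => by positivity
  -- algebraic identities for the integrals
  have h_ug : Integrable (fun x : E3 => (u x) ^ 2 + ‖gradient (⇑u) x‖ ^ 2) := h_u2.add h_g2
  have h_ugw : Integrable (fun x : E3 => (u x) ^ 2 + ‖gradient (⇑u) x‖ ^ 2 + (w x) ^ 2) :=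
    h_ug.add h_w2
  have h_34u4 : Integrable (fun x : E3 => (3 / 4 : ℝ) * (u x) ^ 4) := h_u4.const_mul _
  have hEq1 : (∫ x : E3, ((u x) ^ 2 + ‖gradient (⇑u) x‖ ^ 2 + (w x) ^ 2) / 2)
      = (A + B + W) / 2 := by
    rw [integral_div, integral_add h_ug h_w2, integral_add h_u2 h_g2]
  have hEqN : (∫ x : E3, ((u x) ^ 2 + ‖gradient (⇑u) x‖ ^ 2 + (w x) ^ 2 + (n x) ^ 2))
      = A + B + W + Nn := by
    rw [integral_add h_ugw h_n2, integral_add h_ug h_w2, integral_add h_u2 h_g2]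
  have hK2v : K2fun ⇑u = B - (3 / 4) * P := by
    rw [K2fun, integral_sub h_g2 h_34u4, integral_const_mul]
  have hMv : M = Nn - 2 * X + P := by
    have he : (fun x : E3 => (n x - (u x) ^ 2) ^ 2)
        = fun x => ((n x) ^ 2 - 2 * (n x * (u x) ^ 2)) + (u x) ^ 4 := by
      funext x; ring
    have h_2nu2 : Integrable (fun x : E3 => (2 : ℝ) * (n x * (u x) ^ 2)) := h_nu2.const_mul _
    have h_sub : Integrable (fun x : E3 => (n x) ^ 2 - (2 : ℝ) * (n x * (u x) ^ 2)) :=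
      h_n2.sub h_2nu2
    rw [hM_def, he, integral_add h_sub h_u4, integral_sub h_n2 h_2nu2, integral_const_mul]
  have hEv : Efun α ⇑u ⇑w ⇑n ⇑v
      = (A + B + W) / 2 + (1 / 4) * ((α ^ 2)⁻¹ * Hm + Nn) - (1 / 2) * X := by
    rw [Efun, hEq1]
  -- key inequalities
  have hPB : P ≤ (4 / 3) * B := by rw [hK2v] at hK2; linarith
  have hNnle : Nn ≤ 2 * M + 2 * P := by
    have hpt : (fun x : E3 => (n x) ^ 2)
        ≤ fun x => 2 * (n x - (u x) ^ 2) ^ 2 + 2 * (u x) ^ 4 := by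
      intro x
      simp only []
      nlinarith [sq_nonneg (n x - 2 * (u x) ^ 2)]
    calc Nn ≤ ∫ x : E3, (2 * (n x - (u x) ^ 2) ^ 2 + 2 * (u x) ^ 4) :=
          integral_mono h_n2 (((h_m.const_mul 2).add (h_u4.const_mul 2) :)) hpt
      _ = 2 * M + 2 * P := by
          have h2m : Integrable (fun x : E3 => (2 : ℝ) * (n x - (u x) ^ 2) ^ 2) :=
            h_m.const_mul _
          have h2p : Integrable (fun x : E3 => (2 : ℝ) * (u x) ^ 4) := h_u4.const_mul _
          rw [integral_add h2m h2p, integral_const_mul, integral_const_mul]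
  have hXle : |X| ≤ (Nn + P) / 2 := by
    have h1 : |X| ≤ ∫ x : E3, |n x * (u x) ^ 2| := by
      simpa only [Real.norm_eq_abs] using
        norm_integral_le_integral_norm (μ := volume) (fun x : E3 => n x * (u x) ^ 2)
    have h2 : (∫ x : E3, |n x * (u x) ^ 2|) ≤ ∫ x : E3, ((n x) ^ 2 + (u x) ^ 4) / 2 := by
      refine integral_mono h_nu2.abs (((h_n2.add h_u4).div_const 2 :)) fun x => ?_
      simp only []
      rw [abs_mul, abs_of_nonneg (sq_nonneg (u x))]
      nlinarith [sq_nonneg (|n x| - (u x) ^ 2), sq_abs (n x), abs_nonneg (n x)]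
    have h3 : (∫ x : E3, ((n x) ^ 2 + (u x) ^ 4) / 2) = (Nn + P) / 2 := by
      rw [integral_div, integral_add h_n2 h_u4]
    linarith
  -- final arithmetic
  rw [hEqN, hEv]
  have hc1 : min (1/22 : ℝ) ((α ^ 2)⁻¹/4) ≤ 1/22 := min_le_left _ _
  have hc2 : min (1/22 : ℝ) ((α ^ 2)⁻¹/4) ≤ (α ^ 2)⁻¹/4 := min_le_right _ _
  have hc0 : 0 < min (1/22 : ℝ) ((α ^ 2)⁻¹/4) := lt_min (by norm_num) (by positivity)
  have hC1 : (5/6 : ℝ) ≤ max (5/6 : ℝ) ((α ^ 2)⁻¹/4) := le_max_left _ _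
  have hC2 : ((α ^ 2)⁻¹/4 : ℝ) ≤ max (5/6 : ℝ) ((α ^ 2)⁻¹/4) := le_max_right _ _
  set c := min (1/22 : ℝ) ((α ^ 2)⁻¹/4)
  set C := max (5/6 : ℝ) ((α ^ 2)⁻¹/4)
  constructor
  · -- lower bound
    have e1 : c * A ≤ (1/22) * A := mul_le_mul_of_nonneg_right hc1 hA
    have e2 : c * B ≤ (1/22) * B := mul_le_mul_of_nonneg_right hc1 hB
    have e3 : c * W ≤ (1/22) * W := mul_le_mul_of_nonneg_right hc1 hW
    have e4 : c * Nn ≤ (1/22) * (2 * M + 2 * P) :=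
      mul_le_mul hc1 hNnle hNn (by norm_num)
    have e5 : c * Hm ≤ ((α ^ 2)⁻¹/4) * Hm := mul_le_mul_of_nonneg_right hc2 hHm
    have expand : c * (A + B + W + Nn + Hm) = c*A + c*B + c*W + c*Nn + c*Hm := by ring
    rw [expand]
    -- E = (A+B)/2 + W/2 + (α⁻²/4)Hm + M/4 - P/4 using hMv
    have habs : -|X| ≤ X := neg_abs_le X
    linarith [hPB, hMv]
  · -- upper bound
    have e1 : (1/2) * A ≤ C * A := by
      refine mul_le_mul_of_nonneg_right ?_ hA; linarith
    have e2 : (5/6) * B ≤ C * B := mul_le_mul_of_nonneg_right hC1 hB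
    have e3 : (1/2) * W ≤ C * W := by
      refine mul_le_mul_of_nonneg_right ?_ hW; linarith
    have e4 : (1/2) * Nn ≤ C * Nn := by
      refine mul_le_mul_of_nonneg_right ?_ hNn; linarith
    have e5 : ((α ^ 2)⁻¹/4) * Hm ≤ C * Hm := mul_le_mul_of_nonneg_right hC2 hHm
    have expand : C * (A + B + W + Nn + Hm) = C*A + C*B + C*W + C*Nn + C*Hm := by ring
    rw [expand]
    have habs : -|X| ≤ X := neg_abs_le X
    linarith [hPB, hXle]


end
end

section
/- There is no twice continuously differentiable function f : [0, ∞) → ℝ such that f(t) > 0 for all t ≥ 0, f(t)·f''(t) ≥ (5/4)·f'(t)² for all t ≥ 0, and f'(t₀) > 0 for some t₀ ≥ 0. (The reason is that under the differential inequality the function f^{−1/4} is concave, so a point with positive f' forces f^{−1/4} to reach 0, i.e. f to blow up, in finite time.) -/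
open MeasureTheory SchwartzMap
open scoped FourierTransform RealInnerProductSpace ENNReal

noncomputable section

theorem concavity_blowup :
    ¬ ∃ f : ℝ → ℝ,
      ContDiffOn ℝ 2 f (Set.Ici 0) ∧
      (∀ t ∈ Set.Ici (0 : ℝ), 0 < f t) ∧
      (∀ t ∈ Set.Ici (0 : ℝ),
        (5 / 4) * (derivWithin f (Set.Ici 0) t) ^ 2
          ≤ f t * derivWithin (derivWithin f (Set.Ici 0)) (Set.Ici 0) t) ∧
      (∃ t₀ ∈ Set.Ici (0 : ℝ), 0 < derivWithin f (Set.Ici 0) t₀) := by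
  rintro ⟨f, hf, hpos, hineq, t₀, ht₀, hd⟩
  set s : Set ℝ := Set.Ici (0 : ℝ) with hs
  have hus : UniqueDiffOn ℝ s := uniqueDiffOn_Ici 0
  set F := derivWithin f s with hF
  set G := derivWithin F s with hG
  have hF1 : ContDiffOn ℝ 1 F s := hf.derivWithin hus (by norm_num)
  have hFd : DifferentiableOn ℝ F s := hF1.differentiableOn one_ne_zero
  have hfd : DifferentiableOn ℝ f s := hf.differentiableOn (by norm_num)
  have hfc : ContinuousOn f s := hf.continuousOn
  have hFc : ContinuousOn F s := hF1.continuousOn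
  have key : ∀ t : ℝ, 0 < t → HasDerivAt f (F t) t ∧ HasDerivAt F (G t) t := by
    intro t ht
    have hmem : s ∈ nhds t := Ici_mem_nhds ht
    constructor
    · have h1 : DifferentiableAt ℝ f t := (hfd t (le_of_lt ht)).differentiableAt hmem
      have h2 : F t = deriv f t := derivWithin_of_mem_nhds hmem
      rw [h2]; exact h1.hasDerivAt
    · have h1 : DifferentiableAt ℝ F t := (hFd t (le_of_lt ht)).differentiableAt hmem
      have h2 : G t = deriv F t := derivWithin_of_mem_nhds hmem
      rw [h2]; exact h1.hasDerivAt
  -- φ = f' * f^(-5/4), g = f^(-1/4)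
  set φ : ℝ → ℝ := fun t => F t * f t ^ (-(5/4) : ℝ) with hφ
  set g : ℝ → ℝ := fun t => f t ^ (-(1/4) : ℝ) with hg
  set c : ℝ := φ t₀ with hc
  have hct : 0 < c := mul_pos hd (Real.rpow_pos_of_pos (hpos t₀ ht₀) _)
  -- derivative of φ at interior points
  have hφderiv : ∀ t : ℝ, 0 < t → HasDerivAt φ
      (G t * f t ^ (-(5/4) : ℝ) + F t * (F t * (-(5/4)) * f t ^ ((-(5/4) : ℝ) - 1))) t := by
    intro t ht
    obtain ⟨h1, h2⟩ := key t ht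
    have h3 : HasDerivAt (fun u => f u ^ (-(5/4) : ℝ))
        (F t * (-(5/4)) * f t ^ ((-(5/4) : ℝ) - 1)) t :=
      h1.rpow_const (Or.inl (ne_of_gt (hpos t (le_of_lt ht))))
    exact h2.mul h3
  have hφnonneg : ∀ t : ℝ, 0 < t → 0 ≤ deriv φ t := by
    intro t ht
    rw [(hφderiv t ht).deriv]
    have hft : 0 < f t := hpos t (le_of_lt ht)
    have hkey : (5 / 4) * (F t) ^ 2 ≤ f t * G t := hineq t (le_of_lt ht)
    have e1 : f t ^ ((-(5/4) : ℝ) - 1) = f t ^ (-(9/4) : ℝ) := by norm_num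
    have e2 : f t ^ (-(5/4) : ℝ) = f t * f t ^ (-(9/4) : ℝ) := by
      nth_rewrite 2 [← Real.rpow_one (f t)]
      rw [← Real.rpow_add hft]
      norm_num
    rw [e1, e2]
    have h9 : 0 < f t ^ (-(9/4) : ℝ) := Real.rpow_pos_of_pos hft _
    nlinarith [mul_le_mul_of_nonneg_right hkey (le_of_lt h9)]
  -- φ is monotone on Ici t₀
  have hmemc : ∀ t ∈ Set.Ici t₀, (0:ℝ) ≤ t := fun t ht => le_trans ht₀ ht
  have hφcont : ContinuousOn φ (Set.Ici t₀) := by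
    apply ContinuousOn.mul
    · exact hFc.mono (fun t ht => hmemc t ht)
    · exact ContinuousOn.rpow_const (hfc.mono (fun t ht => hmemc t ht))
        (fun t ht => Or.inl (ne_of_gt (hpos t (hmemc t ht))))
  have hφmono : MonotoneOn φ (Set.Ici t₀) := by
    apply monotoneOn_of_deriv_nonneg (convex_Ici t₀) hφcont
    · intro t ht
      rw [interior_Ici] at ht
      exact ((hφderiv t (lt_of_le_of_lt ht₀ ht)).differentiableAt).differentiableWithinAt
    · intro t ht
      rw [interior_Ici] at ht
      exact hφnonneg t (lt_of_le_of_lt ht₀ ht)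
  have hφge : ∀ t ∈ Set.Ici t₀, c ≤ φ t := fun t ht =>
    hφmono (Set.self_mem_Ici) ht ht
  -- ψ = g + (c/4) t is antitone on Ici t₀
  set ψ : ℝ → ℝ := fun t => g t + (c / 4) * t with hψ
  have hgderiv : ∀ t : ℝ, 0 < t → HasDerivAt g (-(1/4) * φ t) t := by
    intro t ht
    have hft : 0 < f t := hpos t (le_of_lt ht)
    have h3 : HasDerivAt (fun u => f u ^ (-(1/4) : ℝ))
        (F t * (-(1/4)) * f t ^ ((-(1/4) : ℝ) - 1)) t :=
      (key t ht).1.rpow_const (Or.inl (ne_of_gt hft))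
    have e : F t * (-(1/4)) * f t ^ ((-(1/4) : ℝ) - 1) = -(1/4) * φ t := by
      have : ((-(1/4) : ℝ) - 1) = (-(5/4) : ℝ) := by norm_num
      rw [this, hφ]; ring
    rw [← e]; exact h3
  have hψderiv : ∀ t : ℝ, 0 < t → HasDerivAt ψ (-(1/4) * φ t + c / 4) t := by
    intro t ht
    have hid : HasDerivAt (fun u : ℝ => c / 4 * u) (c / 4) t := by
      simpa using (hasDerivAt_id t).const_mul (c / 4)
    exact (hgderiv t ht).add hid
  have hψcont : ContinuousOn ψ (Set.Ici t₀) := by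
    apply ContinuousOn.add
    · exact ContinuousOn.rpow_const (hfc.mono (fun t ht => hmemc t ht))
        (fun t ht => Or.inl (ne_of_gt (hpos t (hmemc t ht))))
    · exact (continuous_const.mul continuous_id).continuousOn
  have hψanti : AntitoneOn ψ (Set.Ici t₀) := by
    apply antitoneOn_of_deriv_nonpos (convex_Ici t₀) hψcont
    · intro t ht
      rw [interior_Ici] at ht
      exact ((hψderiv t (lt_of_le_of_lt ht₀ ht)).differentiableAt).differentiableWithinAt
    · intro t ht
      rw [interior_Ici] at ht
      rw [(hψderiv t (lt_of_le_of_lt ht₀ ht)).deriv]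
      have := hφge t (Set.mem_Ici.mpr (le_of_lt ht))
      linarith
  -- contradiction at large time
  have hg0 : 0 < g t₀ := Real.rpow_pos_of_pos (hpos t₀ ht₀) _
  set T : ℝ := t₀ + 4 * g t₀ / c + 1 with hT
  have hTge : t₀ ≤ T := by
    have h1 : 0 < 4 * g t₀ / c := div_pos (by linarith) hct
    rw [hT]
    linarith
  have hgT : 0 < g T := Real.rpow_pos_of_pos (hpos T (le_trans ht₀ hTge)) _
  have := hψanti Set.self_mem_Ici hTge hTge
  have hexp : (c / 4) * T = (c / 4) * t₀ + g t₀ + c / 4 := by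
    rw [hT]
    field_simp
  rw [hψ] at this
  simp only at this
  rw [hexp] at this
  linarith

end
end
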